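/- arXiv:1703.03743 — 3 statements merged into one kernel-verified Lean document; each statement's English description precedes it below -/
import Mathlib

section
/- For any finite Q ⊂ ℤ^d and any m ≥ 1, every f ∈ 𝒯(Q) with ‖f‖₁ ≤ 1 admits an m-term approximant from the dictionary 𝒟¹(Q) in the L₂ norm of error at most (|Q|/m)^{1/2}; that is, σ_m(𝒯(Q)₁, 𝒟¹(Q))₂ ≤ (|Q|/m)^{1/2}. -/
/-!
Maurey's empirical method, derandomized. Let `τ` be the normalized Lebesgue measure of the
torus, `L = ‖f‖₁ > 0`, and `P` the probability measure `|f| dτ / L`. Since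
`f(x) = ∫ f(y) 𝒟_Q(x - y) dτ(y)`, the coefficient vector of `f` is the `P`-mean of the vectors
`L · sgn f(y) · (e^{-i(k,y)})_{k ∈ Q}`, each of Euclidean norm `L |Q|^{1/2}`. For a random
vector `F` of a Hilbert space with mean `v` and `‖F‖ ≤ R`, `E ‖w - F‖² ≤ ‖w - v‖² + R²`, so
points `y₁, …, y_m` can be chosen one at a time with `‖m v - Σ F(y_j)‖² ≤ m R²`. By Parseval,
`(L/m) Σ sgn f(y_j) 𝒟_Q(· - y_j)` is then within `L (|Q|/m)^{1/2} ≤ (|Q|/m)^{1/2}` of `f`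
in `L₂`.
-/

open MeasureTheory Real Finset

noncomputable section

/-- The fundamental cell `[0,2π)^d` of the torus `𝕋^d`. -/
def torusBox (d : ℕ) : Set (Fin d → ℝ) := Set.univ.pi fun _ => Set.Ico 0 (2 * π)

/-- The exponential `e^{i(k,x)}` on `𝕋^d`. -/
def trigMono (d : ℕ) (k : Fin d → ℤ) (x : Fin d → ℝ) : ℂ :=
  Complex.exp (Complex.I * ∑ j, (k j : ℂ) * (x j : ℂ))

/-- The `L₁` norm on `𝕋^d` with respect to the normalized Lebesgue measure `(2π)^{-d} dx`. -/
def torusL1 (d : ℕ) (f : (Fin d → ℝ) → ℂ) : ℝ :=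
  ((2 * π) ^ d)⁻¹ * ∫ x in torusBox d, ‖f x‖

/-- The `L₂` norm on `𝕋^d` with respect to the normalized Lebesgue measure `(2π)^{-d} dx`. -/
def torusL2 (d : ℕ) (f : (Fin d → ℝ) → ℂ) : ℝ :=
  Real.sqrt (((2 * π) ^ d)⁻¹ * ∫ x in torusBox d, ‖f x‖ ^ 2)

/-- The normalized Dirichlet kernel `w_Q = |Q|^{-1/2} 𝒟_Q`, `𝒟_Q(x) = Σ_{k∈Q} e^{i(k,x)}`. -/
def wQ (d : ℕ) (Q : Finset (Fin d → ℤ)) (x : Fin d → ℝ) : ℂ :=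
  ((Real.sqrt (Q.card : ℝ) : ℝ) : ℂ)⁻¹ * ∑ k ∈ Q, trigMono d k x

open ComplexConjugate

section Maurey

variable {V Ω : Type*} [NormedAddCommGroup V] [InnerProductSpace ℝ V] [CompleteSpace V]
  [MeasurableSpace Ω] {P : Measure Ω} [IsProbabilityMeasure P] {F : Ω → V} {R : ℝ}

theorem integral_norm_sub_sq_le (hF : AEStronglyMeasurable F P) (hR : ∀ ω, ‖F ω‖ ≤ R) (w : V) :
    ∫ ω, ‖w - F ω‖ ^ 2 ∂P ≤ ‖w - ∫ ω, F ω ∂P‖ ^ 2 + R ^ 2 := by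
  have hFi : Integrable F P := .of_bound hF R (.of_forall hR)
  have hsq : ∀ ω, ‖F ω‖ ^ 2 ≤ R ^ 2 := fun ω => pow_le_pow_left₀ (norm_nonneg _) (hR ω) 2
  have hsqi : Integrable (fun ω => ‖F ω‖ ^ 2) P :=
    .of_bound (hF.norm.pow 2) (R ^ 2) (.of_forall fun ω => by simpa using hsq ω)
  have hinner : Integrable (fun ω => inner ℝ w (F ω)) P := hFi.const_inner w
  have hlin : Integrable (fun ω => ‖w‖ ^ 2 - 2 * inner ℝ w (F ω)) P :=
    (integrable_const _).sub (hinner.const_mul 2)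
  have hsq_int : ∫ ω, ‖F ω‖ ^ 2 ∂P ≤ R ^ 2 := by
    simpa using integral_mono hsqi (integrable_const (R ^ 2)) hsq
  simp only [norm_sub_sq_real w]
  rw [integral_add hlin hsqi, integral_sub (integrable_const _) (hinner.const_mul 2),
    integral_const_mul, integral_inner hFi, integral_const, probReal_univ, one_smul]
  linarith [sq_nonneg ‖∫ ω, F ω ∂P‖]

theorem exists_norm_add_sub_sq_le (hF : AEStronglyMeasurable F P) (hR : ∀ ω, ‖F ω‖ ≤ R)
    (ρ : V) : ∃ ω, ‖ρ + (∫ x, F x ∂P - F ω)‖ ^ 2 ≤ ‖ρ‖ ^ 2 + R ^ 2 := by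
  set w := ρ + ∫ x, F x ∂P
  have hbound : ∀ ω, ‖‖w - F ω‖ ^ 2‖ ≤ (‖w‖ + R) ^ 2 := fun ω => by
    rw [norm_pow, norm_norm]
    exact pow_le_pow_left₀ (norm_nonneg _) (by linarith [norm_sub_le w (F ω), hR ω]) 2
  obtain ⟨ω, hω⟩ := exists_le_integral
    (Integrable.of_bound ((aestronglyMeasurable_const.sub hF).norm.pow 2) _ (.of_forall hbound))
  refine ⟨ω, ?_⟩
  calc ‖ρ + (∫ x, F x ∂P - F ω)‖ ^ 2 = ‖w - F ω‖ ^ 2 := by rw [add_sub_assoc]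
    _ ≤ ∫ ω, ‖w - F ω‖ ^ 2 ∂P := hω
    _ ≤ ‖w - ∫ x, F x ∂P‖ ^ 2 + R ^ 2 := integral_norm_sub_sq_le hF hR w
    _ = ‖ρ‖ ^ 2 + R ^ 2 := by rw [add_sub_cancel_right]

theorem exists_norm_nsmul_integral_sub_sum_sq_le (hF : AEStronglyMeasurable F P)
    (hR : ∀ ω, ‖F ω‖ ≤ R) (n : ℕ) :
    ∃ ω : Fin n → Ω, ‖n • ∫ x, F x ∂P - ∑ j, F (ω j)‖ ^ 2 ≤ n * R ^ 2 := by
  induction n with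
  | zero => exact ⟨Fin.elim0, by simp⟩
  | succ n ih =>
    obtain ⟨ω, hω⟩ := ih
    obtain ⟨ω', hω'⟩ := exists_norm_add_sub_sq_le hF hR (n • ∫ x, F x ∂P - ∑ j, F (ω j))
    refine ⟨Fin.snoc ω ω', ?_⟩
    have hsplit : (n + 1) • ∫ x, F x ∂P - ∑ j, F (Fin.snoc (α := fun _ => Ω) ω ω' j) =
        (n • ∫ x, F x ∂P - ∑ j, F (ω j)) + (∫ x, F x ∂P - F ω') := by
      rw [Fin.sum_univ_castSucc, succ_nsmul]
      simp only [Fin.snoc_castSucc, Fin.snoc_last]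
      abel
    rw [hsplit]
    push_cast
    linarith

end Maurey

section Torus

variable {d : ℕ}

def torusMeasure (d : ℕ) : Measure (Fin d → ℝ) :=
  ENNReal.ofReal ((2 * π) ^ d)⁻¹ • volume.restrict (torusBox d)

theorem integral_torusMeasure {E : Type*} [NormedAddCommGroup E] [NormedSpace ℝ E]
    (g : (Fin d → ℝ) → E) :
    ∫ x, g x ∂torusMeasure d = ((2 * π) ^ d)⁻¹ • ∫ x in torusBox d, g x := by
  rw [torusMeasure, integral_smul_measure, ENNReal.toReal_ofReal (by positivity)]

instance : IsProbabilityMeasure (torusMeasure d) := by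
  constructor
  rw [torusMeasure, Measure.smul_apply, Measure.restrict_apply_univ, torusBox, volume_pi_Ico,
    smul_eq_mul, Finset.prod_const, Finset.card_univ, Fintype.card_fin, sub_zero,
    ← ENNReal.ofReal_pow (by positivity), ← ENNReal.ofReal_mul (by positivity),
    inv_mul_cancel₀ (by positivity), ENNReal.ofReal_one]

theorem torusL1_eq_integral (f : (Fin d → ℝ) → ℂ) :
    torusL1 d f = ∫ x, ‖f x‖ ∂torusMeasure d := by
  rw [torusL1, integral_torusMeasure, smul_eq_mul]

theorem torusL1_nonneg (f : (Fin d → ℝ) → ℂ) : 0 ≤ torusL1 d f := by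
  rw [torusL1_eq_integral]
  exact integral_nonneg fun _ => norm_nonneg _

theorem torusL2_eq_sqrt_integral (f : (Fin d → ℝ) → ℂ) :
    torusL2 d f = √(∫ x, ‖f x‖ ^ 2 ∂torusMeasure d) := by
  rw [torusL2, integral_torusMeasure, smul_eq_mul]

theorem Continuous.integrable_torusMeasure {E : Type*} [NormedAddCommGroup E]
    {g : (Fin d → ℝ) → E} (hg : Continuous g) : Integrable g (torusMeasure d) :=
  ((hg.continuousOn.integrableOn_compact (isCompact_univ_pi fun _ => isCompact_Icc)).mono_set
    (Set.pi_mono fun _ _ => Set.Ico_subset_Icc_self)).smul_measure ENNReal.ofReal_ne_top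

theorem torusL2_eq_zero_of_torusL1_eq_zero {f : (Fin d → ℝ) → ℂ} (hf : Continuous f)
    (h : torusL1 d f = 0) : torusL2 d f = 0 := by
  rw [torusL1_eq_integral, integral_eq_zero_iff_of_nonneg (fun _ => norm_nonneg _)
    hf.norm.integrable_torusMeasure] at h
  rw [torusL2_eq_sqrt_integral, integral_eq_zero_of_ae (h.mono fun x hx => by simp [hx]),
    Real.sqrt_zero]

theorem continuous_trigMono (k : Fin d → ℤ) : Continuous (trigMono d k) := by
  unfold trigMono
  fun_prop

theorem norm_trigMono (k : Fin d → ℤ) (x : Fin d → ℝ) : ‖trigMono d k x‖ = 1 := by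
  rw [trigMono, Complex.norm_exp]
  simp

theorem trigMono_eq_prod (k : Fin d → ℤ) (x : Fin d → ℝ) :
    trigMono d k x = ∏ j, Complex.exp ((k j * x j : ℝ) * Complex.I) := by
  rw [trigMono, ← Complex.exp_sum, Finset.mul_sum]
  push_cast
  simp only [mul_comm Complex.I]

theorem trigMono_mul_conj (k l : Fin d → ℤ) (x : Fin d → ℝ) :
    trigMono d k x * conj (trigMono d l x) = trigMono d (k - l) x := by
  simp only [trigMono, ← Complex.exp_conj, ← Complex.exp_add, map_mul, map_sum, Complex.conj_I,
    map_intCast, Complex.conj_ofReal, Pi.sub_apply, Int.cast_sub, sub_mul, Finset.sum_sub_distrib]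
  ring_nf

theorem trigMono_sub (k : Fin d → ℤ) (x y : Fin d → ℝ) :
    trigMono d k (x - y) = trigMono d k x * conj (trigMono d k y) := by
  simp only [trigMono, ← Complex.exp_conj, ← Complex.exp_add, map_mul, map_sum, Complex.conj_I,
    map_intCast, Complex.conj_ofReal, Pi.sub_apply, Complex.ofReal_sub, mul_sub,
    Finset.sum_sub_distrib]
  ring_nf

theorem integral_exp_int_mul_I_Ico (n : ℤ) :
    ∫ t in Set.Ico 0 (2 * π), Complex.exp ((n * t : ℝ) * Complex.I) =
      if n = 0 then ((2 * π : ℝ) : ℂ) else 0 := by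
  rw [restrict_Ico_eq_restrict_Ioc, ← intervalIntegral.integral_of_le (by positivity)]
  split_ifs with hn
  · simp [hn]
  · have hc : (n * Complex.I : ℂ) ≠ 0 := by simp [hn]
    simp only [Complex.ofReal_mul, Complex.ofReal_intCast, mul_right_comm _ _ Complex.I]
    rw [integral_exp_mul_complex hc, show (n * Complex.I : ℂ) * ((2 * π : ℝ) : ℂ) =
      n * (2 * π * Complex.I) by push_cast; ring, Complex.exp_int_mul_two_pi_mul_I]
    simp

theorem integral_trigMono (k : Fin d → ℤ) :
    ∫ x, trigMono d k x ∂torusMeasure d = if k = 0 then 1 else 0 := by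
  rw [integral_torusMeasure, torusBox, volume_pi, Measure.restrict_pi_pi]
  simp only [trigMono_eq_prod]
  rw [integral_fintype_prod_eq_prod (fun j t => Complex.exp ((k j * t : ℝ) * Complex.I))]
  simp only [integral_exp_int_mul_I_Ico]
  split_ifs with hk
  · simp [hk]
  · obtain ⟨j, hj⟩ := Function.ne_iff.mp hk
    rw [Finset.prod_eq_zero (Finset.mem_univ j) (if_neg hj), smul_zero]

theorem integral_trigMono_mul_conj (k l : Fin d → ℤ) :
    ∫ x, trigMono d k x * conj (trigMono d l x) ∂torusMeasure d = if k = l then 1 else 0 := by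
  simp only [trigMono_mul_conj, integral_trigMono, sub_eq_zero]

end Torus

section TrigPoly

variable {d : ℕ} (Q : Finset (Fin d → ℤ))

def trigPoly : EuclideanSpace ℂ Q →ₗ[ℂ] (Fin d → ℝ) → ℂ where
  toFun u x := ∑ k : Q, u k * trigMono d k x
  map_add' u v := by ext x; simp [add_mul, Finset.sum_add_distrib]
  map_smul' c u := by ext x; simp [Finset.mul_sum, mul_assoc]

def dirichletCoeffs (y : Fin d → ℝ) : EuclideanSpace ℂ Q :=
  WithLp.toLp 2 fun k => conj (trigMono d k y)

variable {Q}

theorem trigPoly_apply (u : EuclideanSpace ℂ Q) (x : Fin d → ℝ) :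
    trigPoly Q u x = ∑ k : Q, u k * trigMono d k x := rfl

theorem continuous_trigPoly (u : EuclideanSpace ℂ Q) : Continuous (trigPoly Q u) := by
  simp only [funext (trigPoly_apply u)]
  have := continuous_trigMono (d := d)
  fun_prop

theorem continuous_dirichletCoeffs : Continuous (dirichletCoeffs (d := d) Q) := by
  unfold dirichletCoeffs
  have := continuous_trigMono (d := d)
  fun_prop

theorem norm_dirichletCoeffs (y : Fin d → ℝ) : ‖dirichletCoeffs Q y‖ = √(Q.card : ℝ) := by
  simp [EuclideanSpace.norm_eq, dirichletCoeffs, norm_trigMono]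

theorem trigPoly_dirichletCoeffs (x y : Fin d → ℝ) :
    trigPoly Q (dirichletCoeffs Q y) x = √(Q.card : ℝ) * wQ d Q (x - y) := by
  have hD : ∑ k ∈ Q, trigMono d k (x - y) = ∑ k : Q, conj (trigMono d k y) * trigMono d k x := by
    rw [← Finset.sum_coe_sort]
    simp only [trigMono_sub, mul_comm]
  rcases Q.eq_empty_or_nonempty with rfl | hQ
  · simp [trigPoly_apply]
  · rw [wQ, ← mul_assoc, mul_inv_cancel₀ (by simpa using hQ.card_pos.ne'), one_mul, hD]
    rfl

theorem inner_dirichletCoeffs (u : EuclideanSpace ℂ Q) (y : Fin d → ℝ) :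
    inner ℂ (dirichletCoeffs Q y) u = trigPoly Q u y := by
  simp [PiLp.inner_apply, dirichletCoeffs, trigPoly_apply, mul_comm]

theorem integral_trigPoly_smul_dirichletCoeffs (u : EuclideanSpace ℂ Q) :
    ∫ y, trigPoly Q u y • dirichletCoeffs Q y ∂torusMeasure d = u := by
  have hint : Integrable (fun y => trigPoly Q u y • dirichletCoeffs Q y) (torusMeasure d) :=
    ((continuous_trigPoly u).smul continuous_dirichletCoeffs).integrable_torusMeasure
  ext k
  have hk := (EuclideanSpace.proj (𝕜 := ℂ) k).integral_comp_comm hint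
  simp only [EuclideanSpace.coe_proj] at hk
  rw [← hk]
  simp only [PiLp.smul_apply, dirichletCoeffs, smul_eq_mul,
    trigPoly_apply, Finset.sum_mul, mul_assoc]
  rw [integral_finsetSum _ fun l _ =>
    ((continuous_trigMono l.1).mul (Complex.continuous_conj.comp
      (continuous_trigMono k.1))).integrable_torusMeasure.const_mul _]
  simp only [integral_const_mul, integral_trigMono_mul_conj, Subtype.coe_inj, mul_ite, mul_one,
    mul_zero, Finset.sum_ite_eq', Finset.mem_univ, if_true]

theorem torusL2_trigPoly (u : EuclideanSpace ℂ Q) : torusL2 d (trigPoly Q u) = ‖u‖ := by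
  have hsq : ∀ y, ‖trigPoly Q u y‖ ^ 2 =
      RCLike.re (inner ℂ u (trigPoly Q u y • dirichletCoeffs Q y)) := fun y => by
    rw [inner_smul_right, ← inner_conj_symm, inner_dirichletCoeffs, Complex.mul_conj,
      Complex.normSq_eq_norm_sq]
    exact (Complex.ofReal_re _).symm
  have hint : Integrable (fun y => trigPoly Q u y • dirichletCoeffs Q y) (torusMeasure d) :=
    ((continuous_trigPoly u).smul continuous_dirichletCoeffs).integrable_torusMeasure
  rw [torusL2_eq_sqrt_integral]
  simp only [hsq]
  rw [integral_re (hint.const_inner u), integral_inner hint,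
    integral_trigPoly_smul_dirichletCoeffs, inner_self_eq_norm_sq, Real.sqrt_sq (norm_nonneg u)]

theorem trigPoly_sub_sum_mul_wQ (u : EuclideanSpace ℂ Q) {m : ℕ} (hm : m ≠ 0) (s : Fin m → ℂ)
    (y : Fin m → Fin d → ℝ) :
    (fun x => trigPoly Q u x - ∑ j, (m : ℂ)⁻¹ * s j * √(Q.card : ℝ) * wQ d Q (x - y j)) =
      trigPoly Q ((m : ℂ)⁻¹ • (m • u - ∑ j, s j • dirichletCoeffs Q (y j))) := by
  ext x
  simp only [map_smul, map_sub, map_nsmul, map_sum, Pi.smul_apply, Pi.sub_apply,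
    Finset.sum_apply, trigPoly_dirichletCoeffs, smul_eq_mul, nsmul_eq_mul, Pi.mul_apply,
    Pi.natCast_apply]
  rw [mul_sub, ← mul_assoc, inv_mul_cancel₀ (Nat.cast_ne_zero.mpr hm), one_mul, Finset.mul_sum]
  exact congrArg _ (Finset.sum_congr rfl fun j _ => by ring)

end TrigPoly

section Empirical

variable {d : ℕ}

/-- The probability measure `|f| dτ / ‖f‖₁` (meaningful when `‖f‖₁ ≠ 0`). -/
def normMeasure (f : (Fin d → ℝ) → ℂ) : Measure (Fin d → ℝ) :=
  (torusMeasure d).withDensity fun x => ENNReal.ofReal (‖f x‖ / torusL1 d f)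

theorem isProbabilityMeasure_normMeasure {f : (Fin d → ℝ) → ℂ} (hf : Continuous f)
    (hL : 0 < torusL1 d f) : IsProbabilityMeasure (normMeasure f) := by
  constructor
  rw [normMeasure, withDensity_apply _ MeasurableSet.univ, Measure.restrict_univ,
    ← ofReal_integral_eq_lintegral_ofReal (hf.norm.integrable_torusMeasure.div_const _)
      (.of_forall fun _ => div_nonneg (norm_nonneg _) hL.le),
    integral_div, ← torusL1_eq_integral, div_self hL.ne', ENNReal.ofReal_one]

theorem integral_normMeasure {E : Type*} [NormedAddCommGroup E] [NormedSpace ℝ E]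
    {f : (Fin d → ℝ) → ℂ} (hf : Continuous f) (g : (Fin d → ℝ) → E) :
    ∫ x, g x ∂normMeasure f = ∫ x, (‖f x‖ / torusL1 d f) • g x ∂torusMeasure d := by
  rw [normMeasure, integral_withDensity_eq_integral_toReal_smul (by fun_prop)
    (.of_forall fun _ => ENNReal.ofReal_lt_top)]
  simp only [ENNReal.toReal_ofReal (div_nonneg (norm_nonneg _) (torusL1_nonneg f))]

theorem exists_norm_nsmul_sub_sum_dirichletCoeffs_sq_le {Q : Finset (Fin d → ℤ)}
    {f : (Fin d → ℝ) → ℂ} (hf : Continuous f) (hL : 0 < torusL1 d f) (m : ℕ) :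
    ∃ y : Fin m → Fin d → ℝ, ‖m • ∫ x, f x • dirichletCoeffs Q x ∂torusMeasure d -
      ∑ j, (torusL1 d f * (f (y j) / ‖f (y j)‖)) • dirichletCoeffs Q (y j)‖ ^ 2 ≤
        m * (torusL1 d f * √(Q.card : ℝ)) ^ 2 := by
  have := isProbabilityMeasure_normMeasure hf hL
  set L := torusL1 d f with hLdef
  set F : (Fin d → ℝ) → EuclideanSpace ℂ Q := fun y => (L * (f y / ‖f y‖)) • dirichletCoeffs Q y
  have hphase : ∀ y, ‖L * (f y / ‖f y‖)‖ ≤ L := fun y => by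
    rw [norm_mul, norm_div, Complex.norm_real, Complex.norm_real, norm_norm,
      Real.norm_of_nonneg hL.le]
    exact mul_le_of_le_one_right hL.le (div_self_le_one _)
  have hfm := hf.measurable
  have hF : AEStronglyMeasurable F (normMeasure f) :=
    (Measurable.aestronglyMeasurable (f := fun y => (L : ℂ) * (f y / ‖f y‖))
      (by fun_prop)).smul
      continuous_dirichletCoeffs.aestronglyMeasurable
  have hR : ∀ y, ‖F y‖ ≤ L * √(Q.card : ℝ) := fun y => by
    rw [norm_smul, norm_dirichletCoeffs]
    exact mul_le_mul_of_nonneg_right (hphase y) (Real.sqrt_nonneg _)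
  have hmean : ∫ y, F y ∂normMeasure f = ∫ y, f y • dirichletCoeffs Q y ∂torusMeasure d := by
    rw [integral_normMeasure hf, ← hLdef]
    refine integral_congr_ae (.of_forall fun y => ?_)
    simp only [F, ← smul_assoc]
    congr 1
    rcases eq_or_ne (f y) 0 with h | h
    · simp [h]
    · have hnorm : (‖f y‖ : ℂ) ≠ 0 := by simpa using h
      have hL0 : (L : ℂ) ≠ 0 := by exact_mod_cast hL.ne'
      rw [Complex.real_smul]
      push_cast
      field_simp
  simpa [hmean] using exists_norm_nsmul_integral_sub_sum_sq_le hF hR m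

end Empirical

/-- **Theorem 2.3.** For any finite `Q ⊂ ℤ^d`, every `f ∈ 𝒯(Q)` with `‖f‖₁ ≤ 1` admits an
`m`-term approximant from the dictionary `𝒟¹(Q) = {w_Q(· - y)}_{y ∈ 𝕋^d}` with `L₂` error
at most `(|Q|/m)^{1/2}`; that is, `σ_m(𝒯(Q)₁, 𝒟¹(Q))₂ ≤ (|Q|/m)^{1/2}`. -/
theorem sigma_m_TQ1_D1 (d : ℕ) (Q : Finset (Fin d → ℤ)) (c : (Fin d → ℤ) → ℂ)
    (f : (Fin d → ℝ) → ℂ) (hf : f = fun x => ∑ k ∈ Q, c k * trigMono d k x)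
    (hf1 : torusL1 d f ≤ 1) (m : ℕ) (hm : 1 ≤ m) :
    ∃ (y : Fin m → Fin d → ℝ) (a : Fin m → ℂ),
      torusL2 d (fun x => f x - ∑ j, a j * wQ d Q (x - y j)) ≤
        Real.sqrt ((Q.card : ℝ) / m) := by
  set u : EuclideanSpace ℂ Q := WithLp.toLp 2 fun k => c k
  obtain rfl : f = trigPoly Q u := by
    rw [hf]
    ext x
    rw [trigPoly_apply, ← Finset.sum_coe_sort Q]
  set L := torusL1 d (trigPoly Q u)
  rcases (torusL1_nonneg (trigPoly Q u)).eq_or_lt with hL | hL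
  · refine ⟨0, 0, ?_⟩
    simp only [Pi.zero_apply, zero_mul, Finset.sum_const_zero, sub_zero]
    rw [torusL2_eq_zero_of_torusL1_eq_zero (continuous_trigPoly u) hL.symm]
    positivity
  obtain ⟨y, hy⟩ :=
    exists_norm_nsmul_sub_sum_dirichletCoeffs_sq_le (Q := Q) (continuous_trigPoly u) hL m
  rw [integral_trigPoly_smul_dirichletCoeffs] at hy
  set s : Fin m → ℂ := fun j => L * (trigPoly Q u (y j) / ‖trigPoly Q u (y j)‖)
  refine ⟨y, fun j => (m : ℂ)⁻¹ * s j * √(Q.card : ℝ), ?_⟩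
  rw [trigPoly_sub_sum_mul_wQ u (by omega) s y, torusL2_trigPoly, norm_smul, norm_inv,
    Complex.norm_natCast]
  apply Real.le_sqrt_of_sq_le
  calc ((m : ℝ)⁻¹ * ‖m • u - ∑ j, s j • dirichletCoeffs Q (y j)‖) ^ 2
      ≤ (m : ℝ)⁻¹ ^ 2 * (m * (L * √(Q.card : ℝ)) ^ 2) := by rw [mul_pow]; gcongr
    _ = L ^ 2 * Q.card / m := by
      rw [mul_pow, Real.sq_sqrt (Nat.cast_nonneg _)]
      field_simp
    _ ≤ Q.card / m := by
      gcongr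
      exact mul_le_of_le_one_left (Nat.cast_nonneg _) (pow_le_one₀ hL.le hf1)

end
end

section
/- Let {u_i}_{i=1}^N be a real orthonormal system on Ω satisfying conditions B and C, let g_i := K₂^{−1/2} u_i, and for t = Σ_{i=1}^N c_i g_i ∈ X_N set ‖t‖_A := Σ_{i=1}^N |c_i|. Then for every t ∈ X_N and every m ≥ 1 there exists an m-term polynomial G_m(t) = Σ_{j∈Λ} a_j g_j with |Λ| ≤ m such that ‖t − G_m(t)‖_∞ ≤ C m^{−1/2} (ln N)^{1/2} ‖t‖_A and ‖G_m(t)‖_A = ‖t‖_A, where C = C(K₃,K₄). -/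
/-!
Maurey's empirical method. With `S = ‖t‖_A`, `t / S = ∑ wᵢ (εᵢ gᵢ)` is a convex combination of
functions bounded by `1` (`wᵢ = |cᵢ| / S`, `εᵢ = ±1`). Draw `m` indices independently with law `w`
and let `G` be `S` times the empirical mean of the drawn `εᵢ gᵢ`. At each point, `t - G` is `S / m`
times a sum of `m` independent centred variables bounded by `2`; expanding its `2q`-th power, only
index patterns without singleton fibres survive, and there are at most `(e q m)^q` of them, so
`E (t - G)^{2q} ≤ (4 e q / m)^q S^{2q}`. Integrating over `μ`, some sample has
`‖t - G‖_{2q} ≤ 2 S √(e q / m)`. Condition C with `p = 2q`, `q = ⌈ln N⌉`, where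
`N^{K₄ / 2q} ≤ e^{|K₄|}`, turns this into the uniform bound.
-/

open MeasureTheory Real Finset

lemma two_mul_card_image_le_of_card_fiber_ne_one {α β : Type*} [Fintype α] [DecidableEq β]
    (f : α → β) (hf : ∀ b, #{a | f a = b} ≠ 1) : 2 * #(univ.image f) ≤ Fintype.card α := by
  calc 2 * #(univ.image f) = ∑ _b ∈ univ.image f, 2 := by rw [sum_const, smul_eq_mul, mul_comm]
    _ ≤ ∑ b ∈ univ.image f, #{a | f a = b} := sum_le_sum fun b hb => by
        obtain ⟨a, -, rfl⟩ := mem_image.1 hb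
        have hpos : 0 < #{a' | f a' = f a} := card_pos.2 ⟨a, by simp⟩
        have := hf (f a)
        omega
    _ = Fintype.card α := (card_eq_sum_card_image f univ).symm

def noSingletonFiberMaps (p n : ℕ) : Finset (Fin p → Fin n) :=
  {f | ∀ k, #{t | f t = k} ≠ 1}

lemma card_noSingletonFiberMaps_le_choose_mul {q n : ℕ} (hqn : q ≤ n) :
    #(noSingletonFiberMaps (2 * q) n) ≤ n.choose q * q ^ (2 * q) := by
  calc #(noSingletonFiberMaps (2 * q) n)
      ≤ #((powersetCard q univ).biUnion fun T => Fintype.piFinset fun _ : Fin (2 * q) => T) := by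
        refine card_le_card fun f hf => ?_
        have himage := two_mul_card_image_le_of_card_fiber_ne_one f (mem_filter.1 hf).2
        obtain ⟨T, hfT, hT⟩ := exists_superset_card_eq (s := univ.image f) (n := q)
          (by simp only [Fintype.card_fin] at himage; omega) (by simpa using hqn)
        simp only [mem_biUnion, mem_powersetCard, Fintype.mem_piFinset]
        exact ⟨T, ⟨subset_univ T, hT⟩, fun t => hfT (mem_image_of_mem f (mem_univ t))⟩
    _ ≤ ∑ T ∈ powersetCard q univ, #(Fintype.piFinset fun _ : Fin (2 * q) => T) :=
        card_biUnion_le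
    _ = n.choose q * q ^ (2 * q) := by
        rw [sum_congr rfl fun T hT => by
          rw [Fintype.card_piFinset, prod_const, (mem_powersetCard.1 hT).2, card_univ,
            Fintype.card_fin]]
        simp

lemma card_noSingletonFiberMaps_le (q n : ℕ) :
    (#(noSingletonFiberMaps (2 * q) n) : ℝ) ≤ (exp 1 * q * n) ^ q := by
  rcases le_or_gt q n with hqn | hnq
  · have hchoose : (n.choose q : ℝ) ≤ n ^ q / q.factorial := Nat.choose_le_pow_div q n
    have hfact : (q : ℝ) ^ q / q.factorial ≤ exp q :=
      pow_div_factorial_le_exp _ (Nat.cast_nonneg q) q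
    calc (#(noSingletonFiberMaps (2 * q) n) : ℝ) ≤ n.choose q * q ^ (2 * q) := by
          exact_mod_cast card_noSingletonFiberMaps_le_choose_mul hqn
      _ ≤ n ^ q / q.factorial * q ^ (2 * q) := by gcongr
      _ = n ^ q * q ^ q * ((q : ℝ) ^ q / q.factorial) := by ring
      _ ≤ n ^ q * q ^ q * exp q := by gcongr
      _ = (exp 1 * q * n) ^ q := by rw [← exp_one_pow]; ring
  · calc (#(noSingletonFiberMaps (2 * q) n) : ℝ) ≤ Fintype.card (Fin (2 * q) → Fin n) := by
          exact_mod_cast card_le_univ _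
      _ = (n * n) ^ q := by simp [pow_mul, sq]
      _ ≤ (exp 1 * q * n) ^ q := by
          gcongr
          calc (n : ℝ) ≤ 1 * q := by rw [one_mul]; exact_mod_cast hnq.le
            _ ≤ exp 1 * q := by gcongr; exact one_le_exp zero_le_one

section Moments

variable {ι : Type*} [Fintype ι]

lemma sum_prod_mul_prod_eq_prod_moment (w Z : ι → ℝ) {n p : ℕ} (f : Fin p → Fin n) :
    ∑ j : Fin n → ι, (∏ k, w (j k)) * ∏ t, Z (j (f t))
      = ∏ k, ∑ i, w i * Z i ^ #{t | f t = k} := by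
  rw [Fintype.prod_sum]
  refine sum_congr rfl fun j _ => ?_
  rw [← prod_fiberwise' univ f (fun k => Z (j k)), ← prod_mul_distrib]
  simp only [prod_const]

variable {w : ι → ℝ}

lemma sum_prod_mul_sum_pow_le (hw0 : ∀ i, 0 ≤ w i) (hw1 : ∑ i, w i = 1) {Z : ι → ℝ}
    (hZ : ∑ i, w i * Z i = 0) {B : ℝ} (hZB : ∀ i, |Z i| ≤ B) (n q : ℕ) :
    ∑ j : Fin n → ι, (∏ k, w (j k)) * (∑ k, Z (j k)) ^ (2 * q)
      ≤ (exp 1 * q * n) ^ q * B ^ (2 * q) := by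
  set M : ℕ → ℝ := fun e => ∑ i, w i * Z i ^ e
  have hM : ∀ e, |M e| ≤ B ^ e := fun e =>
    calc |M e| ≤ ∑ i, w i * |Z i| ^ e := by
          refine (abs_sum_le_sum_abs _ _).trans_eq (sum_congr rfl fun i _ => ?_)
          rw [abs_mul, abs_of_nonneg (hw0 i), abs_pow]
      _ ≤ ∑ i, w i * B ^ e := by gcongr with i; exacts [hw0 i, hZB i]
      _ = B ^ e := by rw [← sum_mul, hw1, one_mul]
  -- a fibre of size one contributes the vanishing first moment
  have hvanish : ∀ f ∉ noSingletonFiberMaps (2 * q) n, ∏ k, M #{t | f t = k} = 0 := by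
    intro f hf
    obtain ⟨k, hk⟩ : ∃ k, #{t | f t = k} = 1 := by simpa [noSingletonFiberMaps] using hf
    exact prod_eq_zero (mem_univ k) (by simpa only [M, hk, pow_one] using hZ)
  have hbound : ∀ f : Fin (2 * q) → Fin n, ∏ k, M #{t | f t = k} ≤ B ^ (2 * q) := fun f =>
    calc ∏ k, M #{t | f t = k} ≤ ∏ k, |M #{t | f t = k}| := (le_abs_self _).trans_eq (abs_prod _ _)
      _ ≤ ∏ k, B ^ #{t | f t = k} := prod_le_prod (fun _ _ => abs_nonneg _) fun _ _ => hM _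
      _ = B ^ (2 * q) := by
          rw [prod_pow_eq_pow_sum, ← card_eq_sum_card_fiberwise fun t _ => mem_univ (f t),
            card_univ, Fintype.card_fin]
  calc ∑ j : Fin n → ι, (∏ k, w (j k)) * (∑ k, Z (j k)) ^ (2 * q)
      = ∑ f : Fin (2 * q) → Fin n, ∑ j : Fin n → ι, (∏ k, w (j k)) * ∏ t, Z (j (f t)) := by
        rw [sum_comm]
        refine sum_congr rfl fun j _ => ?_
        rw [← Fin.prod_const, Fintype.prod_sum, mul_sum]
    _ = ∑ f ∈ noSingletonFiberMaps (2 * q) n, ∏ k, M #{t | f t = k} := by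
        rw [sum_subset (subset_univ _) fun f _ hf => hvanish f hf]
        exact sum_congr rfl fun f _ => sum_prod_mul_prod_eq_prod_moment w Z f
    _ ≤ #(noSingletonFiberMaps (2 * q) n) * B ^ (2 * q) := by
        rw [← nsmul_eq_mul, ← sum_const]
        exact sum_le_sum fun f _ => hbound f
    _ ≤ (exp 1 * q * n) ^ q * B ^ (2 * q) :=
        mul_le_mul_of_nonneg_right (card_noSingletonFiberMaps_le q n)
          ((even_two_mul q).pow_nonneg B)

lemma sum_prod_eq_one (hw1 : ∑ i, w i = 1) (n : ℕ) : ∑ j : Fin n → ι, ∏ k, w (j k) = 1 := by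
  rw [← Fintype.prod_sum fun (_ : Fin n) i => w i, hw1, prod_const_one]

lemma sum_prod_mul_sub_average_pow_le (hw0 : ∀ i, 0 ≤ w i) (hw1 : ∑ i, w i = 1) {y : ι → ℝ}
    (hy : ∀ i, |y i| ≤ 1) {m : ℕ} (hm : m ≠ 0) (q : ℕ) :
    ∑ j : Fin m → ι, (∏ k, w (j k)) * (∑ i, w i * y i - (∑ k, y (j k)) / m) ^ (2 * q)
      ≤ (4 * exp 1 * q / m) ^ q := by
  set s := ∑ i, w i * y i
  have hs : |s| ≤ 1 :=
    calc |s| ≤ ∑ i, w i * |y i| := (abs_sum_le_sum_abs _ _).trans_eq <|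
          sum_congr rfl fun i _ => by rw [abs_mul, abs_of_nonneg (hw0 i)]
      _ ≤ ∑ i, w i * 1 := by gcongr with i; exacts [hw0 i, hy i]
      _ = 1 := by rw [← sum_mul, hw1, one_mul]
  have hmean : ∑ i, w i * (s - y i) = 0 := by
    simp only [mul_sub, sum_sub_distrib, ← sum_mul, hw1, one_mul, s, sub_self]
  have hbound : ∀ i, |s - y i| ≤ 2 := fun i =>
    (abs_sub _ _).trans (by linarith [hy i])
  have hcenter : ∀ j : Fin m → ι, s - (∑ k, y (j k)) / m = (∑ k, (s - y (j k))) / m := by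
    intro j
    rw [sum_sub_distrib, sum_const, card_univ, Fintype.card_fin, nsmul_eq_mul]
    field_simp
  calc ∑ j : Fin m → ι, (∏ k, w (j k)) * (s - (∑ k, y (j k)) / m) ^ (2 * q)
      = (∑ j : Fin m → ι, (∏ k, w (j k)) * (∑ k, (s - y (j k))) ^ (2 * q)) / m ^ (2 * q) := by
        rw [sum_div]
        exact sum_congr rfl fun j _ => by rw [hcenter, div_pow, mul_div_assoc]
    _ ≤ (exp 1 * q * m) ^ q * 2 ^ (2 * q) / m ^ (2 * q) := by
        gcongr
        exact sum_prod_mul_sum_pow_le hw0 hw1 hmean hbound m q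
    _ = (4 * exp 1 * q / m) ^ q := by
        have hm' : (m : ℝ) ≠ 0 := Nat.cast_ne_zero.2 hm
        rw [pow_mul, pow_mul, ← mul_pow, ← div_pow]
        congr 1
        field_simp
        ring

end Moments

lemma exists_integral_le_of_ae_sum_mul_le {α ι : Type*} [MeasurableSpace α] [Fintype ι]
    {μ : Measure α} [IsProbabilityMeasure μ] {W : ι → ℝ} (hW0 : ∀ i, 0 ≤ W i)
    (hW1 : ∑ i, W i = 1) {F : ι → α → ℝ} {B : ℝ} (hB : 0 ≤ B)
    (h : ∀ᵐ x ∂μ, ∑ i, W i * F i x ≤ B) : ∃ i, ∫ x, F i x ∂μ ≤ B := by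
  by_cases hint : ∀ i, Integrable (F i) μ
  · have : Nonempty ι := by
      by_contra hempty
      simp [not_nonempty_iff.1 hempty] at hW1
    obtain ⟨i, hi⟩ := Finite.exists_min fun i => ∫ x, F i x ∂μ
    refine ⟨i, ?_⟩
    calc ∫ x, F i x ∂μ = ∑ j, W j * ∫ x, F i x ∂μ := by rw [← sum_mul, hW1, one_mul]
      _ ≤ ∑ j, W j * ∫ x, F j x ∂μ :=
          sum_le_sum fun j _ => mul_le_mul_of_nonneg_left (hi j) (hW0 j)
      _ = ∫ x, ∑ j, W j * F j x ∂μ := by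
          rw [integral_finsetSum _ fun j _ => (hint j).const_mul _]
          simp only [integral_const_mul]
      _ ≤ ∫ _, B ∂μ :=
          integral_mono_ae (integrable_finsetSum _ fun j _ => (hint j).const_mul _)
            (integrable_const B) h
      _ = B := by simp
  · push Not at hint
    obtain ⟨i, hi⟩ := hint
    exact ⟨i, by rw [integral_undef hi]; exact hB⟩

section Sampling

variable {α ι : Type*} [MeasurableSpace α] [Fintype ι] {μ : Measure α} [IsProbabilityMeasure μ]
  {w : ι → ℝ}

lemma exists_integral_sub_average_pow_le (hw0 : ∀ i, 0 ≤ w i) (hw1 : ∑ i, w i = 1)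
    {h : ι → α → ℝ} (hh : ∀ᵐ x ∂μ, ∀ i, |h i x| ≤ 1) {m : ℕ} (hm : m ≠ 0) (q : ℕ) :
    ∃ j : Fin m → ι,
      ∫ x, (∑ i, w i * h i x - (∑ k, h (j k) x) / m) ^ (2 * q) ∂μ ≤ (4 * exp 1 * q / m) ^ q :=
  exists_integral_le_of_ae_sum_mul_le (fun _ => prod_nonneg fun _ _ => hw0 _)
    (sum_prod_eq_one hw1 m) (by positivity)
    (hh.mono fun _ hx => sum_prod_mul_sub_average_pow_le hw0 hw1 hx hm q)

theorem exists_sparse_integral_pow_le_of_pos {g : ι → α → ℝ}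
    (hg : ∀ᵐ x ∂μ, ∀ i, |g i x| ≤ 1) {c : ι → ℝ} (hS : 0 < ∑ i, |c i|) {m : ℕ} (hm : m ≠ 0)
    (q : ℕ) :
    ∃ (Λ : Finset ι) (a : ι → ℝ), #Λ ≤ m ∧ ∑ i ∈ Λ, |a i| = ∑ i, |c i| ∧
      ∫ x, (∑ i, c i * g i x - ∑ i ∈ Λ, a i * g i x) ^ (2 * q) ∂μ
        ≤ (4 * exp 1 * q / m) ^ q * (∑ i, |c i|) ^ (2 * q) := by
  classical
  set S := ∑ i, |c i|
  -- signs with `ε i = 1` when `c i = 0`, so that every sampled index carries the weight `S / m`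
  set ε : ι → ℝ := fun i => if c i < 0 then -1 else 1
  have hε : ∀ i, |ε i| = 1 := fun i => by simp only [ε]; split_ifs <;> simp
  have hεc : ∀ i, |c i| * ε i = c i := fun i => by
    simp only [ε]; split_ifs with h
    · simp [abs_of_neg h]
    · simp [abs_of_nonneg (not_lt.1 h)]
  set w : ι → ℝ := fun i => |c i| / S
  have hw1 : ∑ i, w i = 1 := by simp only [w, ← sum_div, S, div_self hS.ne']
  have hh : ∀ᵐ x ∂μ, ∀ i, |ε i * g i x| ≤ 1 :=
    hg.mono fun x hx i => by rw [abs_mul, hε, one_mul]; exact hx i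
  obtain ⟨j, hj⟩ := exists_integral_sub_average_pow_le (fun i => by positivity) hw1 hh hm q
  set a : ι → ℝ := fun i => S / m * #{k | j k = i} * ε i
  refine ⟨univ.image j, a, card_image_le.trans (by simp), ?_, ?_⟩
  · calc ∑ i ∈ univ.image j, |a i| = S / m * ∑ i ∈ univ.image j, (#{k | j k = i} : ℝ) := by
          rw [mul_sum]
          refine sum_congr rfl fun i _ => ?_
          rw [abs_mul, hε, mul_one, abs_of_nonneg (by positivity)]
      _ = S := by
          rw [← Nat.cast_sum, ← card_eq_sum_card_image, card_univ, Fintype.card_fin]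
          field_simp
  have hdiff : ∀ x, ∑ i, c i * g i x - ∑ i ∈ univ.image j, a i * g i x
      = S * (∑ i, w i * (ε i * g i x) - (∑ k, ε (j k) * g (j k) x) / m) := by
    intro x
    have htarget : S * ∑ i, w i * (ε i * g i x) = ∑ i, c i * g i x := by
      rw [mul_sum]
      refine sum_congr rfl fun i _ => ?_
      rw [← hεc i]
      simp only [w]
      field_simp [hS.ne']
    have hsample : S * ((∑ k, ε (j k) * g (j k) x) / m) = ∑ i ∈ univ.image j, a i * g i x := by
      rw [sum_comp (fun i => ε i * g i x) j, sum_div, mul_sum]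
      refine sum_congr rfl fun i _ => ?_
      simp only [a, nsmul_eq_mul]
      ring
    rw [mul_sub, htarget, hsample]
  simp only [hdiff, mul_pow, integral_const_mul]
  rw [mul_comm]
  gcongr

theorem exists_sparse_integral_pow_le {g : ι → α → ℝ} (hg : ∀ᵐ x ∂μ, ∀ i, |g i x| ≤ 1)
    (c : ι → ℝ) {m : ℕ} (hm : m ≠ 0) {q : ℕ} (hq : q ≠ 0) :
    ∃ (Λ : Finset ι) (a : ι → ℝ), #Λ ≤ m ∧ ∑ i ∈ Λ, |a i| = ∑ i, |c i| ∧
      ∫ x, (∑ i, c i * g i x - ∑ i ∈ Λ, a i * g i x) ^ (2 * q) ∂μ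
        ≤ (4 * exp 1 * q / m) ^ q * (∑ i, |c i|) ^ (2 * q) := by
  rcases (sum_nonneg fun i _ => abs_nonneg (c i)).eq_or_lt with hS | hS
  · have hc : ∀ i, c i = 0 := fun i => abs_eq_zero.1 <|
      (sum_eq_zero_iff_of_nonneg fun i _ => abs_nonneg (c i)).1 hS.symm i (mem_univ i)
    exact ⟨∅, 0, by simp, by simp [hc], by simp [hc, hq]⟩
  · exact exists_sparse_integral_pow_le_of_pos hg hS hm q

end Sampling

lemma integral_abs_rpow_rpow_one_div_le {α : Type*} [MeasurableSpace α] {μ : Measure α}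
    {f : α → ℝ} {p : ℕ} (hp : Even p) (hp0 : p ≠ 0) {A : ℝ} (hA : 0 ≤ A)
    (h : ∫ x, f x ^ p ∂μ ≤ A ^ p) :
    (∫ x, |f x| ^ (p : ℝ) ∂μ) ^ (1 / (p : ℝ)) ≤ A := by
  simp only [rpow_natCast, hp.pow_abs]
  calc (∫ x, f x ^ p ∂μ) ^ (1 / (p : ℝ)) ≤ (A ^ p) ^ (1 / (p : ℝ)) :=
        rpow_le_rpow (integral_nonneg fun x => hp.pow_nonneg _) h (by positivity)
    _ = A := by rw [one_div, pow_rpow_inv_natCast hA hp0]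

lemma rpow_div_le_exp_abs {x p : ℝ} (K : ℝ) (hx : 1 ≤ x) (hp0 : 0 < p) (hp : log x ≤ p) :
    x ^ (K / p) ≤ exp |K| := by
  rw [rpow_def_of_pos (by linarith), exp_le_exp]
  calc log x * (K / p) = log x / p * K := by ring
    _ ≤ log x / p * |K| := by gcongr; exacts [div_nonneg (log_nonneg hx) hp0.le, le_abs_self K]
    _ ≤ 1 * |K| := by gcongr; exact div_le_one_of_le₀ hp hp0.le
    _ = |K| := one_mul _

lemma sqrt_four_mul_exp_one_mul_ceil_log_div_le {x : ℝ} (hx : 2 ≤ x) (m : ℕ) :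
    √(4 * exp 1 * ⌈log x⌉₊ / m) ≤ 10 * √(log x) * (√m)⁻¹ := by
  have hlog2 : log 2 ≤ log x := log_le_log (by norm_num) hx
  have hceil : (⌈log x⌉₊ : ℝ) ≤ log x + 1 :=
    (Nat.ceil_lt_add_one (log_nonneg (by linarith))).le
  rw [sqrt_div' _ (Nat.cast_nonneg m), div_eq_mul_inv]
  gcongr
  calc √(4 * exp 1 * ⌈log x⌉₊) ≤ √(10 ^ 2 * log x) :=
        sqrt_le_sqrt (by nlinarith [log_two_gt_d9, exp_one_lt_d9, exp_pos 1])
    _ = 10 * √(log x) := by rw [sqrt_mul (by norm_num), sqrt_sq (by norm_num)]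

lemma le_max_mul_exp_abs_mul_of_nikolskii {α : Type*} [MeasurableSpace α]
    {μ : Measure α} {f : α → ℝ} {q : ℕ} (hq : q ≠ 0) {y K₃ K₄ N A : ℝ} (hN : 1 ≤ N)
    (hqN : log N ≤ 2 * q) (hA : 0 ≤ A) (hf : ∫ x, f x ^ (2 * q) ∂μ ≤ A ^ (2 * q))
    (hy : y ≤ K₃ * N ^ (K₄ / ((2 * q : ℕ) : ℝ))
      * (∫ x, |f x| ^ ((2 * q : ℕ) : ℝ) ∂μ) ^ (1 / ((2 * q : ℕ) : ℝ))) :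
    y ≤ max K₃ 1 * exp |K₄| * A := by
  have hNpow : N ^ (K₄ / ((2 * q : ℕ) : ℝ)) ≤ exp |K₄| :=
    rpow_div_le_exp_abs K₄ hN (by positivity) (by push_cast; exact hqN)
  calc y ≤ max K₃ 1 * N ^ (K₄ / ((2 * q : ℕ) : ℝ))
        * (∫ x, |f x| ^ ((2 * q : ℕ) : ℝ) ∂μ) ^ (1 / ((2 * q : ℕ) : ℝ)) := by
        refine hy.trans ?_
        gcongr
        exact le_max_left _ _
    _ ≤ max K₃ 1 * exp |K₄| * A := by
        gcongr
        exact integral_abs_rpow_rpow_one_div_le (even_two_mul q) (by omega) hA hf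

lemma abs_inv_sqrt_mul_le_one {K y : ℝ} (h : y ^ 2 ≤ K) : |(√K)⁻¹ * y| ≤ 1 := by
  rw [abs_mul, abs_inv, abs_of_nonneg (sqrt_nonneg K)]
  exact inv_mul_le_one_of_le₀ (abs_le_sqrt h) (sqrt_nonneg K)

lemma sum_mul_const_mul_mem_span_range {X ι : Type*} (v : ι → X → ℝ) (r : ℝ) (s : Finset ι)
    (b : ι → ℝ) : (fun x => ∑ i ∈ s, b i * (r * v i x)) ∈ Submodule.span ℝ (Set.range v) := by
  have hsum : (fun x => ∑ i ∈ s, b i * (r * v i x)) = ∑ i ∈ s, (b i * r) • v i := by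
    ext x
    simp [Finset.sum_apply, mul_assoc]
  rw [hsum]
  exact Submodule.sum_mem _ fun i _ => Submodule.smul_mem _ _ (Submodule.subset_span ⟨i, rfl⟩)

/-- **Theorem 4.5.**  Let `{u_i}_{i=1}^N` be a real orthonormal system on a compact
`Ω ⊂ ℝ^d` (with probability measure `μ`) satisfying conditions B and C, let
`g_i := K₂^{-1/2} u_i`, and for `t = Σ_i c_i g_i ∈ X_N` set `‖t‖_A := Σ_i |c_i|`.  Then for
every `t ∈ X_N` and every `m ≥ 1` there is an `m`-term polynomial `G_m(t) = Σ_{j∈Λ} a_j g_j`,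
`|Λ| ≤ m`, with `‖t - G_m(t)‖_∞ ≤ C m^{-1/2} (ln N)^{1/2} ‖t‖_A` and `‖G_m(t)‖_A = ‖t‖_A`,
where `C = C(K₃,K₄)`. -/
theorem incremental_greedy_Linf (K₃ K₄ : ℝ) :
    ∃ C : ℝ, 0 < C ∧
      ∀ (d : ℕ) (Ω : Set (Fin d → ℝ)) (μ : Measure (Fin d → ℝ)),
        IsProbabilityMeasure μ → IsCompact Ω → μ Ωᶜ = 0 →
        ∀ (N : ℕ) (K₂ : ℝ) (u : Fin N → (Fin d → ℝ) → ℝ),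
          (∀ i, ContinuousOn (u i) Ω) →
          -- orthonormality
          (∀ i j, (∫ x, u i x * u j x ∂μ) = if i = j then (1 : ℝ) else 0) →
          -- condition B
          (∀ i, ∀ x ∈ Ω, (u i x) ^ 2 ≤ K₂) →
          -- condition C (Nikol'skii-type inequality)
          (∀ f ∈ Submodule.span ℝ (Set.range u), ∀ p : ℝ, 2 ≤ p →
            ∀ x ∈ Ω, |f x| ≤ K₃ * (N : ℝ) ^ (K₄ / p) * (∫ y, |f y| ^ p ∂μ) ^ (1 / p)) →
          ∀ (c : Fin N → ℝ) (m : ℕ), 1 ≤ m →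
            ∃ (Λ : Finset (Fin N)) (a : Fin N → ℝ),
              Λ.card ≤ m ∧
              (∀ x ∈ Ω,
                |(∑ i, c i * ((Real.sqrt K₂)⁻¹ * u i x)) -
                    ∑ j ∈ Λ, a j * ((Real.sqrt K₂)⁻¹ * u j x)| ≤
                  C * (Real.sqrt (m : ℝ))⁻¹ * Real.sqrt (Real.log N) * ∑ i, |c i|) ∧
              (∑ j ∈ Λ, |a j|) = ∑ i, |c i| := by
  refine ⟨10 * max K₃ 1 * exp |K₄|, by positivity, ?_⟩
  intro d Ω μ _ _ hΩ N K₂ u _ _ hB hC c m hm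
  by_cases hNm : N ≤ m
  · exact ⟨univ, c, by simpa using hNm, fun x _ => by simp; positivity, rfl⟩
  have hN : (2 : ℝ) ≤ N := by exact_mod_cast (by omega : 2 ≤ N)
  set q := ⌈log N⌉₊
  have hq : 1 ≤ q := Nat.ceil_pos.2 (log_pos (by linarith))
  have hg : ∀ᵐ x ∂μ, ∀ i, |(√K₂)⁻¹ * u i x| ≤ 1 := (ae_iff.2 hΩ : ∀ᵐ x ∂μ, x ∈ Ω).mono
    fun x hx i => abs_inv_sqrt_mul_le_one (hB i x hx)
  obtain ⟨Λ, a, hΛ, hA, hint⟩ :=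
    exists_sparse_integral_pow_le hg c (by omega : m ≠ 0) (by omega : q ≠ 0)
  refine ⟨Λ, a, hΛ, fun x hx => ?_, hA⟩
  set S := ∑ i, |c i|
  have hf := Submodule.sub_mem _ (sum_mul_const_mul_mem_span_range u (√K₂)⁻¹ univ c)
    (sum_mul_const_mul_mem_span_range u (√K₂)⁻¹ Λ a)
  calc _ ≤ max K₃ 1 * exp |K₄| * (S * √(4 * exp 1 * q / m)) := by
        refine le_max_mul_exp_abs_mul_of_nikolskii (q := q) (by omega)
          (by linarith) (by linarith [Nat.le_ceil (log N)]) (by positivity) ?_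
          (hC _ hf _ (by push_cast; linarith [(by exact_mod_cast hq : (1 : ℝ) ≤ q)]) x hx)
        rw [mul_pow, pow_mul √(4 * exp 1 * q / m) 2 q, sq_sqrt (by positivity)]
        exact hint.trans_eq (mul_comm _ _)
    _ ≤ max K₃ 1 * exp |K₄| * (S * (10 * √(log N) * (√m)⁻¹)) := by
        gcongr
        exact sqrt_four_mul_exp_one_mul_ceil_log_div_le hN m
    _ = 10 * max K₃ 1 * exp |K₄| * (√m)⁻¹ * √(log N) * S := by ring
end

section
/- Let {u_i}_{i=1}^N be a real orthonormal system on Ω satisfying condition E, i.e. Σ_{i=1}^N u_i(x)² ≤ N t² for every x ∈ Ω, for some constant t. Then there exists a set of m ≤ C(t) N² points ξ¹,…,ξ^m ∈ Ω such that for every f = Σ_{i=1}^N c_i u_i one has (1/2)‖f‖₂² ≤ (1/m) Σ_{j=1}^m f(ξ^j)² ≤ (3/2)‖f‖₂². -/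
/-!
Write `f = ∑ i, c i * u i` and view the matrix `u(x) u(x)ᵀ` as a vector `M x` of the Euclidean
space `ℓ²(Fin N × Fin N)`, so that `f(x)² = ⟪c cᵀ, M x⟫`. Orthonormality says that `∫ M dμ` is
the identity `I`, and condition E bounds `‖M x‖ = ∑ i, u i x ^ 2` by `N t²`. So `I` lies in the
closed convex hull of a set of radius `N t²`, and Maurey's empirical method gives `m ≈ 64 N² t⁴`
points whose average `A` of `M` satisfies `‖A - I‖ ≤ 1/2`. As `‖c cᵀ‖ = ⟪c cᵀ, I⟫ = ‖f‖₂²`,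
Cauchy–Schwarz yields `|m⁻¹ ∑ j, f(ξ j)² - ‖f‖₂²| ≤ ‖f‖₂² / 2`.
-/

open MeasureTheory Real RealInnerProductSpace

section Maurey

variable {H : Type*} [NormedAddCommGroup H] [InnerProductSpace ℝ H] {S : Set H} {p : H} {R : ℝ}

lemma exists_mem_norm_add_sub_sq_le (hp : p ∈ convexHull ℝ S) (hR : ∀ z ∈ S, ‖z - p‖ ≤ R)
    (e : H) : ∃ z ∈ S, ‖e + (z - p)‖ ^ 2 ≤ ‖e‖ ^ 2 + R ^ 2 := by
  -- minimum principle: the linear functional `⟪e, ·⟫` is at most `⟪e, p⟫` somewhere on `S`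
  obtain ⟨z, hzS, hz⟩ := ((innerₛₗ ℝ e).concaveOn convex_univ).exists_le_of_mem_convexHull
    (Set.subset_univ S) hp
  have hinner : ⟪e, z - p⟫ ≤ 0 := by
    rw [inner_sub_right]
    exact sub_nonpos.2 hz
  have hnorm : ‖z - p‖ ^ 2 ≤ R ^ 2 := pow_le_pow_left₀ (norm_nonneg _) (hR z hzS) 2
  refine ⟨z, hzS, ?_⟩
  rw [norm_add_sq_real]
  linarith

lemma exists_norm_sum_sub_smul_sq_le (hp : p ∈ convexHull ℝ S) (hR : ∀ z ∈ S, ‖z - p‖ ≤ R)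
    (m : ℕ) : ∃ ξ : Fin m → H, (∀ j, ξ j ∈ S) ∧ ‖∑ j, ξ j - (m : ℝ) • p‖ ^ 2 ≤ m * R ^ 2 := by
  induction m with
  | zero => exact ⟨Fin.elim0, fun j => j.elim0, by simp⟩
  | succ m ih =>
    obtain ⟨ξ, hξS, hξ⟩ := ih
    obtain ⟨z, hzS, hz⟩ := exists_mem_norm_add_sub_sq_le hp hR (∑ j, ξ j - (m : ℝ) • p)
    refine ⟨Fin.cons z ξ, Fin.forall_fin_succ.2 ⟨hzS, hξS⟩, ?_⟩
    have hsplit : ∑ j, (Fin.cons z ξ : Fin (m + 1) → H) j - ((m + 1 : ℕ) : ℝ) • p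
        = (∑ j, ξ j - (m : ℝ) • p) + (z - p) := by
      rw [Fin.sum_univ_succ]
      simp only [Fin.cons_zero, Fin.cons_succ]
      push_cast
      rw [add_smul, one_smul]
      abel
    rw [hsplit]
    push_cast
    linarith

lemma exists_norm_average_sub_le (hp : p ∈ convexHull ℝ S) (hR : ∀ z ∈ S, ‖z - p‖ ≤ R)
    {m : ℕ} (hm : 0 < m) {ε : ℝ} (hε : 0 ≤ ε) (hmε : R ^ 2 ≤ m * ε ^ 2) :
    ∃ ξ : Fin m → H, (∀ j, ξ j ∈ S) ∧ ‖(m : ℝ)⁻¹ • ∑ j, ξ j - p‖ ≤ ε := by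
  obtain ⟨ξ, hξS, hξ⟩ := exists_norm_sum_sub_smul_sq_le hp hR m
  refine ⟨ξ, hξS, ?_⟩
  have hm' : (0 : ℝ) < m := by exact_mod_cast hm
  have hsq : ‖∑ j, ξ j - (m : ℝ) • p‖ ^ 2 ≤ (m * ε) ^ 2 := by
    calc _ ≤ m * R ^ 2 := hξ
      _ ≤ m * (m * ε ^ 2) := by gcongr
      _ = (m * ε) ^ 2 := by ring
  rw [← inv_smul_smul₀ hm'.ne' p, ← smul_sub, norm_smul, norm_inv,
    Real.norm_natCast, inv_mul_le_iff₀ hm']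
  exact le_of_pow_le_pow_left₀ two_ne_zero (by positivity) hsq

lemma exists_norm_average_sub_integral_le [CompleteSpace H] {α : Type*} [MeasurableSpace α]
    {μ : Measure α} [IsProbabilityMeasure μ] {f : α → H} {s : Set α} {K ε : ℝ}
    (hf : Integrable f μ) (hs : ∀ᵐ x ∂μ, x ∈ s) (hK : ∀ x ∈ s, ‖f x‖ ≤ K) (hε : 0 < ε)
    {m : ℕ} (hm : 0 < m) (hmε : 16 * K ^ 2 ≤ m * ε ^ 2) :
    ∃ ξ : Fin m → α, (∀ j, ξ j ∈ s) ∧ ‖(m : ℝ)⁻¹ • ∑ j, f (ξ j) - ∫ x, f x ∂μ‖ ≤ ε := by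
  have hmem : ∫ x, f x ∂μ ∈ closure (convexHull ℝ (f '' s)) :=
    (convex_convexHull ℝ _).closure.integral_mem isClosed_closure
      (hs.mono fun x hx => subset_closure (subset_convexHull ℝ _ (Set.mem_image_of_mem f hx))) hf
  obtain ⟨p, hp, hpI⟩ := Metric.mem_closure_iff.1 hmem (ε / 2) (half_pos hε)
  have hball : convexHull ℝ (f '' s) ⊆ Metric.closedBall 0 K :=
    convexHull_min (Set.image_subset_iff.2 fun x hx => mem_closedBall_zero_iff.2 (hK x hx))
      (convex_closedBall 0 K)
  have hR : ∀ z ∈ f '' s, ‖z - p‖ ≤ 2 * K := fun z hz => by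
    rw [two_mul]
    exact norm_sub_le_of_le (mem_closedBall_zero_iff.1 (hball (subset_convexHull ℝ _ hz)))
      (mem_closedBall_zero_iff.1 (hball hp))
  obtain ⟨y, hy, hyp⟩ := exists_norm_average_sub_le hp hR hm (half_pos hε).le (by linarith)
  choose ξ hξs hξy using hy
  refine ⟨ξ, hξs, ?_⟩
  simp only [hξy]
  calc _ ≤ ‖(m : ℝ)⁻¹ • ∑ j, y j - p‖ + ‖p - ∫ x, f x ∂μ‖ :=
        norm_sub_le_norm_sub_add_norm_sub _ _ _
    _ ≤ ε / 2 + ε / 2 := by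
      rw [← dist_eq_norm p, dist_comm]
      exact add_le_add hyp hpI.le
    _ = ε := add_halves ε

end Maurey

section TensorSq

variable {ι : Type*} [Fintype ι]

/-- `v vᵀ` as a vector of `ℓ²(ι × ι)`, whose norm is the Frobenius norm. -/
def tensorSq (v : ι → ℝ) : EuclideanSpace ℝ (ι × ι) :=
  WithLp.toLp 2 fun p => v p.1 * v p.2

def identityTensor (ι : Type*) [DecidableEq ι] : EuclideanSpace ℝ (ι × ι) :=
  WithLp.toLp 2 fun p => if p.1 = p.2 then 1 else 0

lemma inner_tensorSq (v w : ι → ℝ) : ⟪tensorSq v, tensorSq w⟫ = (∑ i, v i * w i) ^ 2 := by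
  rw [sq, Finset.sum_mul_sum, ← Finset.sum_product']
  simp only [tensorSq, PiLp.inner_apply, RCLike.inner_apply, conj_trivial]
  exact Fintype.sum_congr _ _ fun q => by ring

lemma norm_tensorSq (v : ι → ℝ) : ‖tensorSq v‖ = ∑ i, v i ^ 2 := by
  rw [norm_eq_sqrt_real_inner, inner_tensorSq, sqrt_sq (Finset.sum_nonneg fun i _ => ?_)]
  · simp only [sq]
  · exact mul_self_nonneg _

lemma inner_identityTensor_tensorSq [DecidableEq ι] (v : ι → ℝ) :
    ⟪identityTensor ι, tensorSq v⟫ = ‖tensorSq v‖ := by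
  rw [norm_tensorSq]
  simp [identityTensor, tensorSq, PiLp.inner_apply, Fintype.sum_prod_type, sq]

variable {α : Type*} [MeasurableSpace α] {μ : Measure α} {u : ι → α → ℝ}

lemma integrable_tensorSq [IsFiniteMeasure μ] (hu : ∀ i, AEMeasurable (u i) μ) {K : ℝ}
    (hK : ∀ᵐ x ∂μ, ∑ i, u i x ^ 2 ≤ K) : Integrable (fun x => tensorSq (u · x)) μ := by
  refine Integrable.mono' (integrable_const K) ?_
    (hK.mono fun x hx => (norm_tensorSq _).trans_le hx)
  exact (PiLp.continuous_toLp 2 _).comp_aestronglyMeasurable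
    (aemeasurable_pi_lambda _ fun p : ι × ι => (hu p.1).mul (hu p.2)).aestronglyMeasurable

lemma integral_tensorSq_of_orthonormal [DecidableEq ι]
    (hint : Integrable (fun x => tensorSq (u · x)) μ)
    (horth : ∀ i j, ∫ x, u i x * u j x ∂μ = if i = j then 1 else 0) :
    ∫ x, tensorSq (u · x) ∂μ = identityTensor ι := by
  ext q
  rw [eval_integral_piLp (fun p => hint.eval_piLp p)]
  exact horth q.1 q.2

lemma abs_average_sub_integral_sq_le_of_orthonormal [DecidableEq ι]
    (hint : Integrable (fun x => tensorSq (u · x)) μ)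
    (horth : ∀ i j, ∫ x, u i x * u j x ∂μ = if i = j then 1 else 0) {m : ℕ} {ξ : Fin m → α}
    {δ : ℝ} (hξ : ‖(m : ℝ)⁻¹ • ∑ j, tensorSq (u · (ξ j)) - ∫ x, tensorSq (u · x) ∂μ‖ ≤ δ)
    (c : ι → ℝ) :
    |(m : ℝ)⁻¹ * ∑ j, (∑ i, c i * u i (ξ j)) ^ 2 - ∫ x, (∑ i, c i * u i x) ^ 2 ∂μ| ≤
      δ * ∫ x, (∑ i, c i * u i x) ^ 2 ∂μ := by
  have hsample : (m : ℝ)⁻¹ * ∑ j, (∑ i, c i * u i (ξ j)) ^ 2 =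
      ⟪tensorSq c, (m : ℝ)⁻¹ • ∑ j, tensorSq (u · (ξ j))⟫ := by
    simp only [inner_smul_right, inner_sum, inner_tensorSq]
  have hintegral : ∫ x, (∑ i, c i * u i x) ^ 2 ∂μ = ⟪tensorSq c, ∫ x, tensorSq (u · x) ∂μ⟫ := by
    simp only [← integral_inner hint, inner_tensorSq]
  have hparseval : ⟪tensorSq c, ∫ x, tensorSq (u · x) ∂μ⟫ = ‖tensorSq c‖ := by
    rw [integral_tensorSq_of_orthonormal hint horth, real_inner_comm,
      inner_identityTensor_tensorSq]
  rw [hsample, hintegral, ← inner_sub_right, hparseval, mul_comm]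
  exact (abs_real_inner_le_norm _ _).trans (by gcongr)

end TensorSq

/-- **Proposition 5.1.**  Let `{u_i}_{i=1}^N` be a real orthonormal system on a compact
`Ω ⊂ ℝ^d` (with probability measure `μ`) satisfying condition E: `Σ_i u_i(x)² ≤ N t²` for
all `x ∈ Ω`.  Then there is a set of `m ≤ C(t) N²` points `ξ¹,…,ξ^m ∈ Ω` such that for
every `f = Σ_i c_i u_i` one has `(1/2)‖f‖₂² ≤ (1/m) Σ_j f(ξ^j)² ≤ (3/2)‖f‖₂²`. -/
theorem marcinkiewicz_L2_Nsq (t : ℝ) :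
    ∃ C : ℝ, 0 < C ∧
      ∀ (d : ℕ) (Ω : Set (Fin d → ℝ)) (μ : Measure (Fin d → ℝ)),
        IsProbabilityMeasure μ → IsCompact Ω → μ Ωᶜ = 0 →
        ∀ (N : ℕ) (u : Fin N → (Fin d → ℝ) → ℝ),
          (∀ i, ContinuousOn (u i) Ω) →
          -- orthonormality
          (∀ i j, (∫ x, u i x * u j x ∂μ) = if i = j then (1 : ℝ) else 0) →
          -- condition E
          (∀ x ∈ Ω, (∑ i, (u i x) ^ 2) ≤ (N : ℝ) * t ^ 2) →
          ∃ (m : ℕ) (ξ : Fin m → Fin d → ℝ),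
            (∀ j, ξ j ∈ Ω) ∧
            (m : ℝ) ≤ C * (N : ℝ) ^ 2 ∧
            ∀ c : Fin N → ℝ,
              (1 / 2) * (∫ x, (∑ i, c i * u i x) ^ 2 ∂μ) ≤
                  (1 / (m : ℝ)) * ∑ j, (∑ i, c i * u i (ξ j)) ^ 2 ∧
              (1 / (m : ℝ)) * ∑ j, (∑ i, c i * u i (ξ j)) ^ 2 ≤
                  (3 / 2) * (∫ x, (∑ i, c i * u i x) ^ 2 ∂μ) := by
  refine ⟨64 * t ^ 4 + 2, by positivity, ?_⟩
  intro d Ω μ hμ hΩ hΩc N u hu horth hE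
  rcases N.eq_zero_or_pos with rfl | hN
  · exact ⟨0, Fin.elim0, fun j => j.elim0, by simp, fun c => by simp⟩
  have hae : ∀ᵐ x ∂μ, x ∈ Ω := ae_iff.2 hΩc
  have hu_meas : ∀ i, AEMeasurable (u i) μ := fun i => by
    simpa only [Measure.restrict_eq_self_of_ae_mem hae] using
      (hu i).aemeasurable (μ := μ) hΩ.isClosed.measurableSet
  have hint := integrable_tensorSq hu_meas (hae.mono hE)
  set m := (⌈64 * t ^ 4⌉₊ + 1) * N ^ 2 with hm
  have hm_pos : 0 < m := by positivity
  have hm_ge : 16 * ((N : ℝ) * t ^ 2) ^ 2 ≤ m * (1 / 2) ^ 2 := by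
    have := Nat.le_ceil (64 * t ^ 4)
    rw [hm]; push_cast; nlinarith
  have hm_le : (m : ℝ) ≤ (64 * t ^ 4 + 2) * N ^ 2 := by
    have := Nat.ceil_lt_add_one (by positivity : (0 : ℝ) ≤ 64 * t ^ 4)
    rw [hm]; push_cast; nlinarith
  obtain ⟨ξ, hξΩ, hξ⟩ := exists_norm_average_sub_integral_le hint hae
    (fun x hx => (norm_tensorSq _).trans_le (hE x hx)) one_half_pos hm_pos hm_ge
  refine ⟨m, ξ, hξΩ, hm_le, fun c => ?_⟩
  obtain ⟨hlower, hupper⟩ :=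
    abs_le.1 (abs_average_sub_integral_sq_le_of_orthonormal hint horth hξ c)
  rw [one_div (m : ℝ)]
  constructor <;> linarith
end
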